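/- For each n, the restriction map p_n : {0,1,2,3}^{n+1} → {0,1,2,3}^n, x ↦ x↾n, is a quotient map of posets with respect to the orders ≤_{n+1} and ≤_n. -/

import Mathlib

/-!
Each clause of `≤_{n+1}` restricts to the same clause of `≤_n`, except when the witness
position `l` is the last coordinate, in which case the two restrictions coincide. Conversely,
appending the same entry `0` or `1` to both `a` and `b` keeps every clause of `≤_n` valid,
since such an entry is allowed in the tail after the witness position.
-/

/-- The order `≤ₙ` on `P_n = {0,1,2,3}^n`. -/
def leFin {n : ℕ} (x y : Fin n → Fin 4) : Prop :=
  x = y ∨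
  (∃ l : Fin n, (∀ k, k < l → x k = y k) ∧ x l = 2 ∧ y l = 3 ∧
    ∀ k, l < k → x k = y k ∧ (x k = 0 ∨ x k = 1)) ∨
  (∃ h : 0 < n, x ⟨0, h⟩ = 0 ∧ y ⟨0, h⟩ = 1 ∧
    ∀ k : Fin n, 1 ≤ (k : ℕ) → x k = y k ∧ (x k = 0 ∨ x k = 1))

/-- The restriction map `{0,1,2,3}^{n+1} → {0,1,2,3}^n`. -/
def restrictMap (n : ℕ) (x : Fin (n + 1) → Fin 4) : Fin n → Fin 4 :=
  fun k => x k.castSucc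

@[simp]
theorem restrictMap_snoc (n : ℕ) (a : Fin n → Fin 4) (c : Fin 4) :
    restrictMap n (Fin.snoc a c) = a :=
  funext fun k => Fin.snoc_castSucc (α := fun _ => Fin 4) c a k

theorem leFin_restrictMap {n : ℕ} {x y : Fin (n + 1) → Fin 4} (h : leFin x y) :
    leFin (restrictMap n x) (restrictMap n y) := by
  rcases h with rfl | ⟨l, hlt, hx, hy, hgt⟩ | ⟨h0, hx, hy, hge⟩
  · exact Or.inl rfl
  · induction l using Fin.lastCases with
    | last => exact Or.inl (funext fun k => hlt _ (Fin.castSucc_lt_last k))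
    | cast l =>
      exact Or.inr (Or.inl ⟨l, fun k hk => hlt _ (Fin.castSucc_lt_castSucc_iff.2 hk), hx, hy,
        fun k hk => hgt _ (Fin.castSucc_lt_castSucc_iff.2 hk)⟩)
  · rcases Nat.eq_zero_or_pos n with rfl | hn
    · exact Or.inl (Subsingleton.elim _ _)
    · exact Or.inr (Or.inr ⟨hn, hx, hy, fun k hk => hge _ hk⟩)

theorem leFin_snoc {n : ℕ} {a b : Fin n → Fin 4} {c : Fin 4} (hc : c = 0 ∨ c = 1)
    (h : leFin a b) : leFin (Fin.snoc a c : Fin (n + 1) → Fin 4) (Fin.snoc b c) := by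
  rcases h with rfl | ⟨l, hlt, hx, hy, hgt⟩ | ⟨h0, hx, hy, hge⟩
  · exact Or.inl rfl
  · refine Or.inr (Or.inl ⟨l.castSucc, fun k hk => ?_, by simpa using hx, by simpa using hy,
      fun k hk => ?_⟩)
    · induction k using Fin.lastCases with
      | last => exact absurd hk (Fin.castSucc_lt_last l).asymm
      | cast k => simpa using hlt k (Fin.castSucc_lt_castSucc_iff.1 hk)
    · induction k using Fin.lastCases with
      | last => simpa using hc
      | cast k => simpa using hgt k (Fin.castSucc_lt_castSucc_iff.1 hk)
  · refine Or.inr (Or.inr ⟨n.succ_pos, ?_, ?_, fun k hk => ?_⟩)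
    -- `(⟨0, h0⟩ : Fin n).castSucc` is `⟨0, _⟩` definitionally
    · exact (Fin.snoc_castSucc (α := fun _ => Fin 4) c a ⟨0, h0⟩).trans hx
    · exact (Fin.snoc_castSucc (α := fun _ => Fin 4) c b ⟨0, h0⟩).trans hy
    · induction k using Fin.lastCases with
      | last => simpa using hc
      | cast k => simpa using hge k hk

/-- the restriction map is a quotient map of posets: it is surjective,
order-preserving, and every related pair downstairs lifts to a related pair upstairs. -/
theorem stmt_8 (n : ℕ) :
    Function.Surjective (restrictMap n) ∧
    (∀ x y : Fin (n + 1) → Fin 4, leFin x y → leFin (restrictMap n x) (restrictMap n y)) ∧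
    ∀ a b : Fin n → Fin 4, leFin a b → ∃ x y : Fin (n + 1) → Fin 4,
      leFin x y ∧ restrictMap n x = a ∧ restrictMap n y = b :=
  ⟨fun a => ⟨Fin.snoc a 0, restrictMap_snoc n a 0⟩,
    fun _ _ => leFin_restrictMap,
    fun a b h => ⟨Fin.snoc a 0, Fin.snoc b 0, leFin_snoc (Or.inl rfl) h,
      restrictMap_snoc n a 0, restrictMap_snoc n b 0⟩⟩
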